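/- arXiv:1204.2844 — 3 statements merged into one kernel-verified Lean document; each statement's English description precedes it below -/
import Mathlib

section
/- Let G be a graph with terminals T, and let S be a partition of V \ T into clusters such that each cluster R ∈ S is (1/3)-well-linked (i.e., for every partition (A,B) of R, |E(A,B)| ≥ (1/3)·min{|out(R)∩out(A)|, |out(R)∩out(B)|}). Let H be obtained from G by contracting each cluster of S into a super-node. Then for every partition (T_A, T_B) of T, MinCut_H(T_A, T_B) ≤ 3·MinCut_G(T_A, T_B). -/
open scoped Classical

namespace VS

/-- A walk in a multigraph whose edges `E` have endpoints given by `ends`. -/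
structure Walk (V : Type*) (E : Type*) (ends : E → Sym2 V) where
  n : ℕ
  vert : Fin (n + 1) → V
  edge : Fin n → E
  coh : ∀ i : Fin n, ends (edge i) = s(vert i.castSucc, vert i.succ)

namespace Walk

variable {V E : Type*} {ends : E → Sym2 V}

def start (w : Walk V E ends) : V := w.vert 0

def finish (w : Walk V E ends) : V := w.vert (Fin.last w.n)

def uses (w : Walk V E ends) (f : E) : Prop := ∃ i, w.edge i = f

/-- Number of occurrences of the edge `f` on the walk. -/
noncomputable def mult (w : Walk V E ends) (f : E) : ℕ :=
  Nat.card {i : Fin w.n // w.edge i = f}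

/-- The first edge of the walk, if any. -/
noncomputable def fe (w : Walk V E ends) : Option E :=
  if h : 0 < w.n then some (w.edge ⟨0, h⟩) else none

/-- The last edge of the walk, if any. -/
noncomputable def le (w : Walk V E ends) : Option E :=
  if h : 0 < w.n then some (w.edge ⟨w.n - 1, by omega⟩) else none

/-- All edges of the walk other than the first and the last one have both
endpoints in `S` (i.e. the walk is contained in `S`). -/
def InternalIn (w : Walk V E ends) (S : Set V) : Prop :=
  ∀ i : Fin w.n, (i : ℕ) ≠ 0 → (i : ℕ) + 1 ≠ w.n → ∀ x ∈ ends (w.edge i), x ∈ S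

end Walk

variable {V V' E : Type*}

/-- `e` has exactly one endpoint in `S`, i.e. `e ∈ out(S)`. -/
def Out (ends : E → Sym2 V) (S : Set V) (e : E) : Prop :=
  ∃ u v, ends e = s(u, v) ∧ u ∈ S ∧ v ∉ S

/-- `e` has one endpoint in `A` and the other one in `B`. -/
def Crosses (ends : E → Sym2 V) (A B : Set V) (e : E) : Prop :=
  ∃ u v, ends e = s(u, v) ∧ u ∈ A ∧ v ∈ B

noncomputable def outCard (ends : E → Sym2 V) (S : Set V) : ℕ :=
  Nat.card {e : E // Out ends S e}

noncomputable def crossCard (ends : E → Sym2 V) (A B : Set V) : ℕ :=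
  Nat.card {e : E // Crosses ends A B e}

/-- Value of the minimum edge cut separating `TA` from `TB` (unit capacities). -/
noncomputable def minCut (ends : E → Sym2 V) (TA TB : Set V) : ℕ :=
  sInf { n : ℕ | ∃ A : Set V, TA ⊆ A ∧ Disjoint A TB ∧ n = outCard ends A }

/-- `R` is `α`-well-linked: for every partition `(A, B)` of `R`,
`|E(A,B)| ≥ α · min (|out R ∩ out A|) (|out R ∩ out B|)`. -/
def WellLinked (ends : E → Sym2 V) (α : ℝ) (R : Set V) : Prop :=
  ∀ A B : Set V, A ∪ B = R → Disjoint A B →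
    α * min (Nat.card {e : E // Out ends R e ∧ Out ends A e} : ℝ)
        (Nat.card {e : E // Out ends R e ∧ Out ends B e}) ≤ crossCard ends A B

/-- `R` is `α`-well-linked for the edge set `E' ⊆ out(R)`. -/
def WellLinkedFor (ends : E → Sym2 V) (α : ℝ) (R : Set V) (E' : Set E) : Prop :=
  ∀ A B : Set V, A ∪ B = R → Disjoint A B →
    α * min (Nat.card {e : E // e ∈ E' ∧ Out ends A e} : ℝ)
        (Nat.card {e : E // e ∈ E' ∧ Out ends B e}) ≤ crossCard ends A B

/-- `φ : V → V'` is the quotient map contracting exactly the clusters of `𝒞`. -/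
def IsContraction (φ : V → V') (𝒞 : Set (Set V)) : Prop :=
  (∀ S ∈ 𝒞, ∀ u ∈ S, ∀ v ∈ S, φ u = φ v) ∧
  (∀ u v : V, φ u = φ v → u = v ∨ ∃ S ∈ 𝒞, u ∈ S ∧ v ∈ S)

/-- Amount of flow that the path-flow `F` routes between the vertices `x` and `y`. -/
noncomputable def routed {ends : E → Sym2 V} (F : List (Walk V E ends × ℝ)) (x y : V) : ℝ :=
  (F.map (fun p => if s(p.1.start, p.1.finish) = s(x, y) then p.2 else 0)).sum

/-- Amount of flow that the path-flow `F` routes between the edges `e` and `e'`. -/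
noncomputable def routedE {ends : E → Sym2 V} (F : List (Walk V E ends × ℝ)) (e e' : E) : ℝ :=
  (F.map (fun p =>
    if (p.1.fe = some e ∧ p.1.le = some e') ∨ (p.1.fe = some e' ∧ p.1.le = some e)
    then p.2 else 0)).sum

/-- Total flow of the path-flow `F` through the edge `f` (congestion at `f`,
for unit capacities). -/
noncomputable def congAt {ends : E → Sym2 V} (F : List (Walk V E ends × ℝ)) (f : E) : ℝ :=
  (F.map (fun p => p.2 * (p.1.mult f : ℝ))).sum

/-- All weights of the path-flow are nonnegative. -/
def NonnegWt {ends : E → Sym2 V} (F : List (Walk V E ends × ℝ)) : Prop := ∀ p ∈ F, 0 ≤ p.2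

/-!
Take a minimum cut `A` of `G` and move every cluster `R` entirely to the side of `A` that holds
the majority of `out R`. Only the edges of `out R` at the minority side of `R` can enter the cut;
by well-linkedness there are at most `3 · |E(A ∩ R, R \ A)|` of them, while the edges of
`E(A ∩ R, R \ A) ⊆ out A` leave it. The new cut therefore has at most
`|out A| + 2 · ∑_R |E(A ∩ R, R \ A)| ≤ 3 · |out A|` edges, and being a union of whole clusters and
uncontracted vertices it is the preimage of a cut of `H` of the same size.
-/

theorem card_le_mul_of_subset_sdiff_biUnion_union {α ι : Type*} [DecidableEq α] {k : ℕ}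
    (hk : 1 ≤ k) {D O : Finset α} {s : Finset ι} {C Y : ι → Finset α}
    (hCdisj : (s : Set ι).PairwiseDisjoint C) (hCO : ∀ i ∈ s, C i ⊆ O)
    (hYC : ∀ i ∈ s, (Y i).card ≤ k * (C i).card) (hD : D ⊆ (O \ s.biUnion C) ∪ s.biUnion Y) :
    D.card ≤ k * O.card := by
  have hCO' : s.biUnion C ⊆ O := Finset.biUnion_subset.mpr hCO
  have hD' : D.card ≤ (O.card - ∑ i ∈ s, (C i).card) + ∑ i ∈ s, (Y i).card := by
    calc D.card ≤ (O \ s.biUnion C).card + (s.biUnion Y).card :=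
          (Finset.card_le_card hD).trans (Finset.card_union_le _ _)
      _ ≤ _ := by
          rw [Finset.card_sdiff_of_subset hCO', Finset.card_biUnion hCdisj]
          exact Nat.add_le_add_left Finset.card_biUnion_le _
  have hY : ∑ i ∈ s, (Y i).card ≤ k * ∑ i ∈ s, (C i).card := by
    rw [Finset.mul_sum]; exact Finset.sum_le_sum hYC
  obtain ⟨r, hr⟩ : ∃ r, O.card = ∑ i ∈ s, (C i).card + r :=
    Nat.exists_eq_add_of_le (Finset.card_biUnion hCdisj ▸ Finset.card_le_card hCO')
  rw [hr, Nat.add_sub_cancel_left] at hD'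
  rw [hr]
  nlinarith

theorem natCard_subtype_eq_card_filter [Fintype E] (P : E → Prop) [DecidablePred P] :
    Nat.card {e : E // P e} = (Finset.univ.filter P).card := by
  rw [Nat.card_eq_fintype_card, Fintype.card_subtype]

theorem out_iff_of_ends_eq {ends : E → Sym2 V} {S : Set V} {e : E} {x y : V}
    (h : ends e = s(x, y)) : Out ends S e ↔ (x ∈ S ↔ y ∉ S) := by
  constructor
  · rintro ⟨u, v, huv, hu, hv⟩
    rcases Sym2.eq_iff.mp (h.symm.trans huv) with ⟨rfl, rfl⟩ | ⟨rfl, rfl⟩ <;> tauto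
  · intro hxy
    by_cases hx : x ∈ S
    · exact ⟨x, y, h, hx, hxy.mp hx⟩
    · exact ⟨y, x, h.trans Sym2.eq_swap, not_not.mp (mt hxy.mpr hx), hx⟩

section MinCut

variable (ends : E → Sym2 V) {TA TB : Set V}

theorem minCut_le_outCard {A : Set V} (hTA : TA ⊆ A) (hTB : Disjoint A TB) :
    minCut ends TA TB ≤ outCard ends A :=
  Nat.sInf_le ⟨A, hTA, hTB, rfl⟩

theorem exists_outCard_eq_minCut (hAB : Disjoint TA TB) :
    ∃ A : Set V, TA ⊆ A ∧ Disjoint A TB ∧ outCard ends A = minCut ends TA TB := by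
  obtain ⟨A, hTA, hTB, hA⟩ : minCut ends TA TB ∈
      {n : ℕ | ∃ A : Set V, TA ⊆ A ∧ Disjoint A TB ∧ n = outCard ends A} :=
    Nat.sInf_mem ⟨outCard ends TA, TA, subset_rfl, hAB, rfl⟩
  exact ⟨A, hTA, hTB, hA.symm⟩

end MinCut

section Uncross

variable (ends : E → Sym2 V) (𝒮 : Set (Set V)) (A : Set V)

def MajorityIn (R : Set V) : Prop :=
  Nat.card {e : E // Out ends R e ∧ Out ends (R \ A) e} <
    Nat.card {e : E // Out ends R e ∧ Out ends (A ∩ R) e}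

/-- The part of `R` that changes side when `A` is replaced by `uncross ends 𝒮 A`. -/
def minorityPart (R : Set V) : Set V :=
  if MajorityIn ends A R then R \ A else A ∩ R

def uncross : Set V :=
  (A \ ⋃₀ 𝒮) ∪ ⋃₀ {R | R ∈ 𝒮 ∧ MajorityIn ends A R}

variable {ends 𝒮 A}

theorem diff_sUnion_subset_uncross : A \ ⋃₀ 𝒮 ⊆ uncross ends 𝒮 A :=
  Set.subset_union_left

theorem uncross_subset_union_sUnion : uncross ends 𝒮 A ⊆ A ∪ ⋃₀ 𝒮 :=
  Set.union_subset_union Set.sdiff_subset (Set.sUnion_mono fun _ hR => hR.1)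

theorem mem_uncross_iff_of_mem (hdisj : 𝒮.Pairwise Disjoint) {R : Set V} (hR : R ∈ 𝒮)
    {v : V} (hv : v ∈ R) : v ∈ uncross ends 𝒮 A ↔ MajorityIn ends A R := by
  have hv𝒮 : v ∈ ⋃₀ 𝒮 := ⟨R, hR, hv⟩
  simp only [uncross, Set.mem_union, Set.mem_sdiff, hv𝒮, not_true, and_false, false_or,
    Set.mem_sUnion, Set.mem_ofPred_eq]
  constructor
  · rintro ⟨R', ⟨hR', hmaj⟩, hv'⟩
    rwa [Set.PairwiseDisjoint.elim_set hdisj hR hR' v hv hv']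
  · exact fun hmaj => ⟨R, ⟨hR, hmaj⟩, hv⟩

theorem not_out_uncross_of_forall_mem (hdisj : 𝒮.Pairwise Disjoint) {R : Set V} (hR : R ∈ 𝒮)
    {e : E} (he : ∀ x ∈ ends e, x ∈ R) : ¬ Out ends (uncross ends 𝒮 A) e := by
  rintro ⟨u, v, huv, hu, hv⟩
  have huR := he u (huv ▸ Sym2.mem_mk_left u v)
  have hvR := he v (huv ▸ Sym2.mem_mk_right u v)
  exact hv ((mem_uncross_iff_of_mem hdisj hR hvR).mpr ((mem_uncross_iff_of_mem hdisj hR huR).mp hu))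

theorem out_or_out_minorityPart_of_out_uncross (hdisj : 𝒮.Pairwise Disjoint) {e : E}
    (he : Out ends (uncross ends 𝒮 A) e) :
    Out ends A e ∨ ∃ R ∈ 𝒮, Out ends R e ∧ Out ends (minorityPart ends A R) e := by
  obtain ⟨u, v, huv, hu, hv⟩ := he
  by_cases huA : u ∈ A
  · by_cases hvA : v ∈ A
    · obtain ⟨R, hR, hvR⟩ : v ∈ ⋃₀ 𝒮 := by
        by_contra hv𝒮; exact hv (diff_sUnion_subset_uncross ⟨hvA, hv𝒮⟩)
      have hmaj : ¬ MajorityIn ends A R := mt (mem_uncross_iff_of_mem hdisj hR hvR).mpr hv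
      have huR : u ∉ R := fun huR => hmaj ((mem_uncross_iff_of_mem hdisj hR huR).mp hu)
      have hvu : ends e = s(v, u) := huv.trans Sym2.eq_swap
      refine Or.inr ⟨R, hR, ⟨v, u, hvu, hvR, huR⟩, v, u, hvu, ?_⟩
      simp only [minorityPart, hmaj, if_false]
      exact ⟨⟨hvA, hvR⟩, fun h => huR h.2⟩
    · exact Or.inl ⟨u, v, huv, huA, hvA⟩
  · obtain ⟨R, ⟨hR, hmaj⟩, huR⟩ : u ∈ ⋃₀ {R | R ∈ 𝒮 ∧ MajorityIn ends A R} :=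
      hu.resolve_left fun h => huA h.1
    have hvR : v ∉ R := fun hvR => hv ((mem_uncross_iff_of_mem hdisj hR hvR).mpr hmaj)
    refine Or.inr ⟨R, hR, ⟨u, v, huv, huR, hvR⟩, u, v, huv, ?_⟩
    simp only [minorityPart, hmaj, if_true]
    exact ⟨⟨huR, huA⟩, fun h => hvR h.1⟩

theorem natCard_out_minorityPart_le {k : ℕ} (hk : 0 < k) {R : Set V}
    (hwl : WellLinked ends (1 / k) R) :
    Nat.card {e : E // Out ends R e ∧ Out ends (minorityPart ends A R) e} ≤
      k * crossCard ends (A ∩ R) (R \ A) := by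
  have hcut := hwl (A ∩ R) (R \ A) (by rw [Set.inter_comm, Set.inter_union_sdiff])
    (Set.disjoint_left.mpr fun _ hA hR => hR.2 hA.1)
  have hmin : Nat.card {e : E // Out ends R e ∧ Out ends (minorityPart ends A R) e} =
      min (Nat.card {e : E // Out ends R e ∧ Out ends (A ∩ R) e})
        (Nat.card {e : E // Out ends R e ∧ Out ends (R \ A) e}) := by
    unfold minorityPart
    split_ifs with hmaj
    · exact (min_eq_right hmaj.le).symm
    · exact (min_eq_left (not_lt.mp hmaj)).symm
  rw [← Nat.cast_min, one_div, inv_mul_le_iff₀ (by positivity)] at hcut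
  rw [hmin]
  exact_mod_cast hcut

theorem forall_mem_of_crosses {e : E} {R : Set V} (he : Crosses ends (A ∩ R) (R \ A) e) :
    ∀ x ∈ ends e, x ∈ R := by
  obtain ⟨u, v, huv, hu, hv⟩ := he
  intro x hx
  rcases Sym2.mem_iff.mp (huv ▸ hx) with rfl | rfl
  exacts [hu.2, hv.1]

theorem outCard_uncross_le [Fintype V] [Fintype E] {k : ℕ} (hk : 1 ≤ k)
    (hdisj : 𝒮.Pairwise Disjoint) (hwl : ∀ R ∈ 𝒮, WellLinked ends (1 / k) R) :
    outCard ends (uncross ends 𝒮 A) ≤ k * outCard ends A := by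
  simp only [outCard, natCard_subtype_eq_card_filter]
  have hfin : ∀ R, R ∈ (Set.toFinite 𝒮).toFinset ↔ R ∈ 𝒮 := fun _ => Set.Finite.mem_toFinset _
  refine card_le_mul_of_subset_sdiff_biUnion_union hk (s := (Set.toFinite 𝒮).toFinset)
    (C := fun R => Finset.univ.filter (Crosses ends (A ∩ R) (R \ A)))
    (Y := fun R => Finset.univ.filter fun e => Out ends R e ∧ Out ends (minorityPart ends A R) e)
    ?disj ?sub ?card ?cover
  case disj =>
    intro R hR R' hR' hne
    refine Finset.disjoint_left.mpr fun e he he' => hne ?_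
    obtain ⟨x, y, hxy⟩ := Sym2.exists.mp ⟨ends e, rfl⟩
    have hx : x ∈ ends e := hxy ▸ Sym2.mem_mk_left x y
    exact Set.PairwiseDisjoint.elim_set hdisj ((hfin R).mp hR) ((hfin R').mp hR') x
      (forall_mem_of_crosses (Finset.mem_filter.mp he).2 x hx)
      (forall_mem_of_crosses (Finset.mem_filter.mp he').2 x hx)
  case sub =>
    intro R _ e he
    obtain ⟨u, v, huv, hu, hv⟩ := (Finset.mem_filter.mp he).2
    exact Finset.mem_filter.mpr ⟨Finset.mem_univ e, u, v, huv, hu.1, fun h => hv.2 h⟩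
  case card =>
    intro R hR
    rw [← natCard_subtype_eq_card_filter, ← natCard_subtype_eq_card_filter]
    exact natCard_out_minorityPart_le hk (hwl R ((hfin R).mp hR))
  case cover =>
    intro e he
    have heU := (Finset.mem_filter.mp he).2
    simp only [Finset.mem_union, Finset.mem_sdiff, Finset.mem_biUnion, Finset.mem_filter,
      Finset.mem_univ, true_and, hfin]
    rcases out_or_out_minorityPart_of_out_uncross hdisj heU with hA | ⟨R, hR, hY⟩
    · exact Or.inl ⟨hA, fun ⟨R, hR, hC⟩ =>
        not_out_uncross_of_forall_mem hdisj hR (forall_mem_of_crosses hC) heU⟩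
    · exact Or.inr ⟨R, hR, hY⟩

end Uncross

section Contraction

variable {ends : E → Sym2 V} {φ : V → V'} {S : Set V}

theorem out_map_image_iff (hS : φ ⁻¹' (φ '' S) = S) (e : E) :
    Out (fun e => (ends e).map φ) (φ '' S) e ↔ Out ends S e := by
  obtain ⟨x, y, hxy⟩ := Sym2.exists.mp ⟨ends e, rfl⟩
  have hmap : (ends e).map φ = s(φ x, φ y) := by rw [hxy, Sym2.map_mk]
  have hmem : ∀ z, φ z ∈ φ '' S ↔ z ∈ S := fun z => by rw [← Set.mem_preimage, hS]
  rw [out_iff_of_ends_eq (ends := fun e => (ends e).map φ) hmap, out_iff_of_ends_eq hxy,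
    hmem, hmem]

theorem outCard_map_image (hS : φ ⁻¹' (φ '' S) = S) :
    outCard (fun e => (ends e).map φ) (φ '' S) = outCard ends S :=
  Nat.card_congr (Equiv.subtypeEquivRight (out_map_image_iff hS))

theorem minCut_map_le_outCard {TA TB : Set V} (hS : φ ⁻¹' (φ '' S) = S)
    (hTA : TA ⊆ S) (hTB : Disjoint S TB) :
    minCut (fun e => (ends e).map φ) (φ '' TA) (φ '' TB) ≤ outCard ends S := by
  refine (minCut_le_outCard _ (Set.image_mono hTA) ?_).trans_eq (outCard_map_image hS)
  refine Set.disjoint_left.mpr ?_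
  rintro _ ⟨x, hx, rfl⟩ ⟨y, hy, hyx⟩
  have hyS : y ∈ S := by rw [← hS]; exact ⟨x, hx, hyx.symm⟩
  exact Set.disjoint_left.mp hTB hyS hy

theorem preimage_image_uncross {𝒮 : Set (Set V)} (hdisj : 𝒮.Pairwise Disjoint)
    (hcontr : IsContraction φ 𝒮) (A : Set V) :
    φ ⁻¹' (φ '' uncross ends 𝒮 A) = uncross ends 𝒮 A := by
  refine (Set.subset_preimage_image _ _).antisymm' ?_
  rintro x ⟨y, hy, hyx⟩
  rcases hcontr.2 y x hyx with rfl | ⟨R, hR, hyR, hxR⟩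
  · exact hy
  · exact (mem_uncross_iff_of_mem hdisj hR hxR).mpr ((mem_uncross_iff_of_mem hdisj hR hyR).mp hy)

end Contraction

theorem stmt1_general {V V' E : Type*} [Fintype V] [Fintype E]
    (ends : E → Sym2 V) (φ : V → V') (𝒮 : Set (Set V)) (T : Set V)
    (hdisj : 𝒮.Pairwise Disjoint)
    (hsub : ∀ R ∈ 𝒮, Disjoint R T)
    (hwl : ∀ R ∈ 𝒮, WellLinked ends (1 / 3) R)
    (hcontr : IsContraction φ 𝒮)
    (TA TB : Set V) (hpart : TA ∪ TB = T) (hAB : Disjoint TA TB) :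
    minCut (fun e => (ends e).map φ) (φ '' TA) (φ '' TB) ≤ 3 * minCut ends TA TB := by
  obtain ⟨A, hTA, hTB, hA⟩ := exists_outCard_eq_minCut ends hAB
  have hclT : Disjoint (⋃₀ 𝒮) T := Set.disjoint_sUnion_left.mpr hsub
  have hTAT : TA ⊆ T := hpart ▸ Set.subset_union_left
  have hTBT : TB ⊆ T := hpart ▸ Set.subset_union_right
  calc minCut (fun e => (ends e).map φ) (φ '' TA) (φ '' TB)
      ≤ outCard ends (uncross ends 𝒮 A) :=
        minCut_map_le_outCard (preimage_image_uncross hdisj hcontr A)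
          ((Set.subset_sdiff.mpr ⟨hTA, (hclT.mono_right hTAT).symm⟩).trans
            diff_sUnion_subset_uncross)
          (Set.disjoint_of_subset_left uncross_subset_union_sUnion
            (Set.disjoint_union_left.mpr ⟨hTB, hclT.mono_right hTBT⟩))
    _ ≤ 3 * outCard ends A :=
        outCard_uncross_le (by norm_num) hdisj fun R hR => by simpa using hwl R hR
    _ = 3 * minCut ends TA TB := by rw [hA]

/-- If `𝒮` partitions the non-terminal vertices into `(1/3)`-well-linked
clusters and `H` is obtained from `G` by contracting each cluster, then for every
partition `(TA, TB)` of `T`, `MinCut_H(TA,TB) ≤ 3·MinCut_G(TA,TB)`. -/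
theorem stmt1 {V V' E : Type*} [Fintype V] [Fintype V'] [Fintype E]
    (ends : E → Sym2 V) (φ : V → V') (𝒮 : Set (Set V)) (T : Set V)
    (hdisj : 𝒮.Pairwise Disjoint)
    (hsub : ∀ R ∈ 𝒮, Disjoint R T)
    (hcover : ∀ v : V, v ∉ T → ∃ R ∈ 𝒮, v ∈ R)
    (hwl : ∀ R ∈ 𝒮, WellLinked ends (1 / 3) R)
    (hcontr : IsContraction φ 𝒮)
    (TA TB : Set V) (hpart : TA ∪ TB = T) (hAB : Disjoint TA TB) :
    minCut (fun e => (ends e).map φ) (φ '' TA) (φ '' TB) ≤ 3 * minCut ends TA TB :=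
  stmt1_general ends φ 𝒮 T hdisj hsub hwl hcontr TA TB hpart hAB

end VS
end

section
/- Weak well-linked decomposition termination bound: in a process that maintains a partition W of a vertex set S (with |out(S)| = z), and in each step replaces some R ∈ W by (A,B) with |E(A,B)| < min{|T_A|,|T_B|}/(2^7 log z) (where T_A = out(R)∩out(A), T_B = out(R)∩out(B), and w.l.o.g. |T_A| ≤ |T_B|), the final partition satisfies Σ_{R ∈ W} |out(R)| ≤ 1.2·|out(S)|. -/
/-!
With `δ = 1 / (16 log₂ z)`, the potential `Φ(W) = Σ_{R ∈ W} |out R|^(1+δ)` never increases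
along a sparse split `R = A ⊔ B`: `|out A| ≤ |T_A| + |E(A,B)|`, `|out B| ≤ |T_B| + |E(A,B)|`
and `|out R| = |T_A| + |T_B|`, and the strict convexity of `x ↦ x^(1+δ)` gains more than the
few cut edges cost. The components of `G[S]` have pairwise disjoint boundaries inside
`out(S)`, so initially `Φ ≤ z^(1+δ) = 2^(1/16) z`, and at the end
`Σ_R |out R| ≤ Φ ≤ 2^(1/16) z ≤ 1.2 z`.
-/

open scoped Classical

namespace VS

variable {V V' E : Type*}

/-- Reachability inside the vertex set `S`. -/
def reachIn {V E : Type*} (ends : E → Sym2 V) (S : Set V) : V → V → Prop :=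
  Relation.ReflTransGen (fun a b => a ∈ S ∧ b ∈ S ∧ ∃ e, ends e = s(a, b))

/-- One step of the weak well-linked decomposition: some set `R` of the current
partition is replaced by a partition `(A, B)` of sparsity less than `1/(2^7 log z)`. -/
def WeakStep {V E : Type*} [Fintype E] [DecidableEq V] (ends : E → Sym2 V) (z : ℕ)
    (W W' : Finset (Finset V)) : Prop :=
  ∃ R ∈ W, ∃ A B : Finset V, A.Nonempty ∧ B.Nonempty ∧ Disjoint A B ∧ A ∪ B = R ∧
    (crossCard ends ↑A ↑B : ℝ) * (2 ^ 7 * Real.logb 2 z) <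
      min (Nat.card {e : E // Out ends ↑R e ∧ Out ends ↑A e} : ℝ)
          (Nat.card {e : E // Out ends ↑R e ∧ Out ends ↑B e}) ∧
    W' = insert A (insert B (W.erase R))

lemma out_iff_mem_of_not_mem {V E : Type*} {ends : E → Sym2 V} {X : Set V} {e : E} {u v : V}
    (he : ends e = s(u, v)) (hv : v ∉ X) : Out ends X e ↔ u ∈ X := by
  refine ⟨?_, fun hu => ⟨u, v, he, hu, hv⟩⟩
  rintro ⟨u', v', he', hu', -⟩
  rcases Sym2.eq_iff.1 (he.symm.trans he') with ⟨rfl, -⟩ | ⟨-, rfl⟩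
  · exact hu'
  · exact absurd hu' hv

section Counting

open Finset

variable {V E : Type*} [Fintype E] (ends : E → Sym2 V)

noncomputable def outEdges (X : Set V) : Finset E := univ.filter (Out ends X)

noncomputable def crossEdges (A B : Set V) : Finset E := univ.filter (Crosses ends A B)

variable {ends}

lemma mem_outEdges {X : Set V} {e : E} : e ∈ outEdges ends X ↔ Out ends X e := by
  simp [outEdges]

lemma mem_crossEdges {A B : Set V} {e : E} : e ∈ crossEdges ends A B ↔ Crosses ends A B e := by
  simp [crossEdges]

lemma outCard_eq_card_outEdges (X : Set V) : outCard ends X = #(outEdges ends X) := by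
  rw [outCard, Nat.card_eq_fintype_card, Fintype.card_subtype, outEdges]

lemma crossCard_eq_card_crossEdges (A B : Set V) :
    crossCard ends A B = #(crossEdges ends A B) := by
  rw [crossCard, Nat.card_eq_fintype_card, Fintype.card_subtype, crossEdges]

lemma natCard_out_and_out (R X : Set V) :
    Nat.card {e : E // Out ends R e ∧ Out ends X e} = #(outEdges ends R ∩ outEdges ends X) := by
  rw [Nat.card_eq_fintype_card, Fintype.card_subtype, outEdges, outEdges, ← filter_and]

lemma crossEdges_comm (A B : Set V) : crossEdges ends A B = crossEdges ends B A := by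
  ext e
  simp only [mem_crossEdges, Crosses]
  constructor <;>
  · rintro ⟨u, v, huv, hu, hv⟩
    exact ⟨v, u, huv.trans Sym2.eq_swap, hv, hu⟩

variable {A B R : Set V}

lemma outEdges_inter_disjoint (hd : Disjoint A B) (hu : A ∪ B = R) :
    Disjoint (outEdges ends R ∩ outEdges ends A) (outEdges ends R ∩ outEdges ends B) := by
  simp only [disjoint_left, mem_inter, mem_outEdges]
  rintro e ⟨⟨u, v, he, -, hvR⟩, hA⟩ ⟨-, hB⟩
  rw [← hu, Set.mem_union, not_or] at hvR
  exact Set.disjoint_left.1 hd ((out_iff_mem_of_not_mem he hvR.1).1 hA)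
    ((out_iff_mem_of_not_mem he hvR.2).1 hB)

lemma outEdges_inter_union (hu : A ∪ B = R) :
    outEdges ends R ∩ outEdges ends A ∪ outEdges ends R ∩ outEdges ends B = outEdges ends R := by
  rw [← inter_union_distrib_left, inter_eq_left]
  intro e he
  rw [mem_outEdges] at he
  rw [mem_union, mem_outEdges, mem_outEdges]
  obtain ⟨u, v, huv, huR, hvR⟩ := he
  rw [← hu, Set.mem_union, not_or] at hvR
  rw [out_iff_mem_of_not_mem huv hvR.1, out_iff_mem_of_not_mem huv hvR.2, ← Set.mem_union, hu]
  exact huR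

lemma card_out_inter_add_card_out_inter (hd : Disjoint A B) (hu : A ∪ B = R) :
    #(outEdges ends R ∩ outEdges ends A) + #(outEdges ends R ∩ outEdges ends B) =
      #(outEdges ends R) := by
  rw [← card_union_of_disjoint (outEdges_inter_disjoint hd hu), outEdges_inter_union hu]

lemma outEdges_subset_out_inter_union_crossEdges (hu : A ∪ B = R) :
    outEdges ends A ⊆ outEdges ends R ∩ outEdges ends A ∪ crossEdges ends A B := by
  intro e he
  rw [mem_outEdges] at he
  rw [mem_union, mem_inter, mem_outEdges, mem_outEdges, mem_crossEdges]
  obtain ⟨u, v, huv, huA, hvA⟩ := he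
  by_cases hvR : v ∈ R
  · rw [← hu] at hvR
    exact Or.inr ⟨u, v, huv, huA, hvR.resolve_left hvA⟩
  · exact Or.inl ⟨⟨u, v, huv, hu ▸ Or.inl huA, hvR⟩, u, v, huv, huA, hvA⟩

lemma card_outEdges_le (hu : A ∪ B = R) :
    #(outEdges ends A) ≤ #(outEdges ends R ∩ outEdges ends A) + #(crossEdges ends A B) :=
  (card_le_card (outEdges_subset_out_inter_union_crossEdges hu)).trans (card_union_le _ _)

end Counting

section Components

variable {V E : Type*} {ends : E → Sym2 V} {S : Set V}

lemma reachIn_symm {x y : V} (h : reachIn ends S x y) : reachIn ends S y x := by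
  have : Std.Symm (fun a b : V => a ∈ S ∧ b ∈ S ∧ ∃ e, ends e = s(a, b)) :=
    ⟨fun _ _ ⟨ha, hb, e, he⟩ => ⟨hb, ha, e, he.trans Sym2.eq_swap⟩⟩
  exact Std.Symm.symm (self := Relation.ReflTransGen.stdSymm) _ _ h

variable {X Y : Set V} {x y : V}

lemma eq_of_mem_of_reachIn_classes (hX : ∀ t, t ∈ X ↔ t ∈ S ∧ reachIn ends S x t)
    (hY : ∀ t, t ∈ Y ↔ t ∈ S ∧ reachIn ends S y t) {u : V} (huX : u ∈ X) (huY : u ∈ Y) :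
    X = Y := by
  have hxu := ((hX u).1 huX).2
  have hyu := ((hY u).1 huY).2
  ext t
  rw [hX, hY]
  exact and_congr_right fun _ =>
    ⟨(hyu.trans (reachIn_symm hxu)).trans, (hxu.trans (reachIn_symm hyu)).trans⟩

lemma exists_of_out_reachIn_class (hX : ∀ t, t ∈ X ↔ t ∈ S ∧ reachIn ends S x t) {e : E}
    (he : Out ends X e) : ∃ u v, ends e = s(u, v) ∧ u ∈ X ∧ v ∉ S := by
  obtain ⟨u, v, huv, huX, hvX⟩ := he
  obtain ⟨huS, hxu⟩ := (hX u).1 huX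
  exact ⟨u, v, huv, huX, fun hvS => hvX ((hX v).2 ⟨hvS, hxu.tail ⟨huS, hvS, e, huv⟩⟩)⟩

lemma out_of_out_reachIn_class (hX : ∀ t, t ∈ X ↔ t ∈ S ∧ reachIn ends S x t) {e : E}
    (he : Out ends X e) : Out ends S e := by
  obtain ⟨u, v, huv, huX, hvS⟩ := exists_of_out_reachIn_class hX he
  exact ⟨u, v, huv, ((hX u).1 huX).1, hvS⟩

lemma eq_of_out_reachIn_classes (hX : ∀ t, t ∈ X ↔ t ∈ S ∧ reachIn ends S x t)
    (hY : ∀ t, t ∈ Y ↔ t ∈ S ∧ reachIn ends S y t) {e : E} (heX : Out ends X e)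
    (heY : Out ends Y e) : X = Y := by
  obtain ⟨u, v, huv, huX, hvS⟩ := exists_of_out_reachIn_class hX heX
  have huY : u ∈ Y := by
    rw [← out_iff_mem_of_not_mem huv fun hvY => hvS ((hY v).1 hvY).1]
    exact heY
  exact eq_of_mem_of_reachIn_classes hX hY huX huY

open Finset in
lemma sum_card_outEdges_le_of_reachIn_classes [Fintype E] [DecidableEq V] {S : Finset V}
    {W : Finset (Finset V)}
    (hW : ∀ X ∈ W, ∃ x, ∀ y : V, y ∈ X ↔ (y ∈ S ∧ reachIn ends ↑S x y)) :
    ∑ X ∈ W, #(outEdges ends ↑X) ≤ #(outEdges ends ↑S) := by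
  choose x hx using hW
  have hdisj : (W : Set (Finset V)).PairwiseDisjoint fun X => outEdges ends ↑X := by
    intro X hX Y hY hne
    refine disjoint_left.2 fun e heX heY => hne ?_
    rw [mem_outEdges] at heX heY
    exact Finset.coe_injective (eq_of_out_reachIn_classes (hx X hX) (hx Y hY) heX heY)
  rw [← card_biUnion hdisj]
  refine card_le_card (biUnion_subset.2 fun X hX e he => ?_)
  rw [mem_outEdges] at he ⊢
  exact out_of_out_reachIn_class (hx X hX) he

end Components

section Analysis

/-- Since `a + c ≤ (3/4)(a + b)`, Bernoulli's inequality gives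
`(a + c)^δ ≤ (1 - δ/4)(a + b)^δ`; the saving `(δ/4)(a + c)` on the smaller side pays for
the `2c` added on the left. -/
lemma add_rpow_add_le_of_sparse {δ a b c : ℝ} (hδ0 : 0 < δ) (hδ : δ ≤ 1 / 16) (hc : 0 ≤ c)
    (ha : 8 * c < δ * a) (hb : 8 * c < δ * b) :
    (a + c) ^ (1 + δ) + (b + c) ^ (1 + δ) ≤ (a + b) ^ (1 + δ) := by
  wlog hab : a ≤ b generalizing a b
  · have h := this hb ha (le_of_not_ge hab)
    rw [add_comm b a] at h
    linarith
  have ha0 : 0 < a := pos_of_mul_pos_right (hc.trans_lt (by linarith)) hδ0.le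
  have hca : 128 * c ≤ a := by nlinarith
  have hbernoulli : 3 / 4 ≤ (1 - δ / 4) ^ (1 / δ) := calc
    3 / 4 = 1 + 1 / δ * -(δ / 4) := by field_simp; ring
    _ ≤ (1 + -(δ / 4)) ^ (1 / δ) := one_add_mul_self_le_rpow_one_add (by linarith)
      (by rw [le_div_iff₀ hδ0]; linarith)
    _ = (1 - δ / 4) ^ (1 / δ) := by rw [← sub_eq_add_neg]
  have hA : (a + c) ^ δ ≤ (1 - δ / 4) * (a + b) ^ δ := calc
    (a + c) ^ δ ≤ ((1 - δ / 4) ^ (1 / δ) * (a + b)) ^ δ :=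
      Real.rpow_le_rpow (by linarith) (by nlinarith) hδ0.le
    _ = (1 - δ / 4) * (a + b) ^ δ := by
      rw [Real.mul_rpow (Real.rpow_nonneg (by linarith) _) (by linarith),
        ← Real.rpow_mul (by linarith), one_div_mul_cancel hδ0.ne', Real.rpow_one]
  have hB : (b + c) ^ δ ≤ (a + b) ^ δ := Real.rpow_le_rpow (by linarith) (by linarith) hδ0.le
  have hδ1 : (1 : ℝ) + δ ≠ 0 := by positivity
  rw [Real.rpow_one_add' (by linarith) hδ1, Real.rpow_one_add' (by linarith) hδ1,
    Real.rpow_one_add' (by linarith) hδ1]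
  have hsum : (a + c) * (1 - δ / 4) + (b + c) ≤ a + b := by nlinarith
  have hpow : 0 ≤ (a + b) ^ δ := Real.rpow_nonneg (by linarith) δ
  nlinarith [mul_le_mul_of_nonneg_left hA (by linarith : 0 ≤ a + c),
    mul_le_mul_of_nonneg_left hB (by linarith : 0 ≤ b + c)]

lemma sum_insert_le_add {α : Type*} [DecidableEq α] {f : α → ℝ} (hf : ∀ x, 0 ≤ f x)
    (a : α) (s : Finset α) : ∑ x ∈ insert a s, f x ≤ f a + ∑ x ∈ s, f x := by
  by_cases h : a ∈ s
  · rw [Finset.insert_eq_of_mem h]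
    exact le_add_of_nonneg_left (hf a)
  · rw [Finset.sum_insert h]

lemma sum_rpow_le_rpow_of_sum_le {ι : Type*} {s : Finset ι} {x : ι → ℝ} {z p : ℝ}
    (hx : ∀ i ∈ s, 0 ≤ x i) (hp : 1 ≤ p) (hsum : ∑ i ∈ s, x i ≤ z) :
    ∑ i ∈ s, x i ^ p ≤ z ^ p := by
  have hp' : 1 + (p - 1) ≠ 0 := by linarith
  have hxz : ∀ i ∈ s, x i ≤ z := fun i hi => (Finset.single_le_sum hx hi).trans hsum
  have hz : 0 ≤ z := (Finset.sum_nonneg hx).trans hsum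
  calc ∑ i ∈ s, x i ^ p = ∑ i ∈ s, x i * x i ^ (p - 1) := by
        refine Finset.sum_congr rfl fun i hi => ?_
        rw [← Real.rpow_one_add' (hx i hi) hp', add_sub_cancel]
    _ ≤ ∑ i ∈ s, x i * z ^ (p - 1) := Finset.sum_le_sum fun i hi =>
        mul_le_mul_of_nonneg_left
          (Real.rpow_le_rpow (hx i hi) (hxz i hi) (by linarith)) (hx i hi)
    _ = (∑ i ∈ s, x i) * z ^ (p - 1) := (Finset.sum_mul _ _ _).symm
    _ ≤ z * z ^ (p - 1) := mul_le_mul_of_nonneg_right hsum (Real.rpow_nonneg hz _)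
    _ = z ^ p := by rw [← Real.rpow_one_add' hz hp', add_sub_cancel]

lemma rpow_div_logb {b x : ℝ} (hb : 0 < b) (hb1 : b ≠ 1) (hx : 0 < x) (hx1 : x ≠ 1) (c : ℝ) :
    x ^ (c / Real.logb b x) = b ^ c := by
  have hL : Real.logb b x ≠ 0 := div_ne_zero (Real.log_ne_zero_of_pos_of_ne_one hx hx1)
    (Real.log_ne_zero_of_pos_of_ne_one hb hb1)
  calc x ^ (c / Real.logb b x) = (b ^ Real.logb b x) ^ (c / Real.logb b x) := by
        rw [Real.rpow_logb hb hb1 hx]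
    _ = b ^ c := by rw [← Real.rpow_mul hb.le, mul_div_cancel₀ _ hL]

lemma one_le_logb_two {z : ℝ} (hz : 2 ≤ z) : 1 ≤ Real.logb 2 z := by
  rw [Real.le_logb_iff_rpow_le one_lt_two (by linarith), Real.rpow_one]
  exact hz

lemma rpow_one_add_inv_logb_le {z : ℝ} (hz : 2 ≤ z) :
    z ^ (1 + 1 / (16 * Real.logb 2 z)) ≤ 1.2 * z := by
  have hz0 : 0 < z := by linarith
  have hL := one_le_logb_two hz
  rw [Real.rpow_one_add' hz0.le (by positivity), show 1 / (16 * Real.logb 2 z) =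
    (1 / 16) / Real.logb 2 z by ring, rpow_div_logb two_pos (by norm_num) hz0 (by linarith)]
  have h : (2 : ℝ) ^ (1 / 16 : ℝ) ≤ 1.2 := calc
    (2 : ℝ) ^ (1 / 16 : ℝ) ≤ ((1.2 : ℝ) ^ (16 : ℝ)) ^ (1 / 16 : ℝ) :=
      Real.rpow_le_rpow (by norm_num) (by norm_num) (by norm_num)
    _ = 1.2 := by rw [← Real.rpow_mul (by norm_num)]; norm_num
  nlinarith

end Analysis

section Potential

variable {V E : Type*} {ends : E → Sym2 V}

variable (ends) in
noncomputable def potential (p : ℝ) (W : Finset (Finset V)) : ℝ :=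
  ∑ X ∈ W, (outCard ends ↑X : ℝ) ^ p

lemma sum_outCard_le_potential {p : ℝ} (hp : 1 ≤ p) (W : Finset (Finset V)) :
    ∑ X ∈ W, (outCard ends ↑X : ℝ) ≤ potential ends p W := by
  refine Finset.sum_le_sum fun X _ => ?_
  rcases Nat.eq_zero_or_pos (outCard ends ↑X) with h | h
  · rw [h, Nat.cast_zero, Real.zero_rpow (by linarith)]
  · exact Real.self_le_rpow_of_one_le (Nat.one_le_cast.2 h) hp

variable [Fintype E]

open Finset in
lemma rpow_outCard_add_le_of_sparse {A B R : Set V} (hd : Disjoint A B) (hu : A ∪ B = R)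
    {δ : ℝ} (hδ0 : 0 < δ) (hδ : δ ≤ 1 / 16)
    (hA : 8 * (crossCard ends A B : ℝ) < δ * Nat.card {e : E // Out ends R e ∧ Out ends A e})
    (hB : 8 * (crossCard ends A B : ℝ) < δ * Nat.card {e : E // Out ends R e ∧ Out ends B e}) :
    (outCard ends A : ℝ) ^ (1 + δ) + (outCard ends B : ℝ) ^ (1 + δ) ≤
      (outCard ends R : ℝ) ^ (1 + δ) := by
  simp only [outCard_eq_card_outEdges, crossCard_eq_card_crossEdges, natCard_out_and_out] at *
  have hoA : (#(outEdges ends A) : ℝ) ≤ #(outEdges ends R ∩ outEdges ends A) +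
      #(crossEdges ends A B) := by exact_mod_cast card_outEdges_le hu
  have hoB : (#(outEdges ends B) : ℝ) ≤ #(outEdges ends R ∩ outEdges ends B) +
      #(crossEdges ends A B) := by
    rw [crossEdges_comm]
    exact_mod_cast card_outEdges_le ((Set.union_comm B A).trans hu)
  have hoR : (#(outEdges ends R) : ℝ) = #(outEdges ends R ∩ outEdges ends A) +
      #(outEdges ends R ∩ outEdges ends B) := by
    exact_mod_cast (card_out_inter_add_card_out_inter hd hu).symm
  have hp : (0 : ℝ) ≤ 1 + δ := by linarith
  calc _ ≤ ((#(outEdges ends R ∩ outEdges ends A) : ℝ) + #(crossEdges ends A B)) ^ (1 + δ) +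
        ((#(outEdges ends R ∩ outEdges ends B) : ℝ) + #(crossEdges ends A B)) ^ (1 + δ) :=
      add_le_add (Real.rpow_le_rpow (by positivity) hoA hp)
        (Real.rpow_le_rpow (by positivity) hoB hp)
    _ ≤ _ := by
      rw [hoR]
      exact add_rpow_add_le_of_sparse hδ0 hδ (by positivity) hA hB

lemma potential_le_of_weakStep [DecidableEq V] {z : ℕ} (hz : 2 ≤ z)
    {W W' : Finset (Finset V)} (h : WeakStep ends z W W') :
    potential ends (1 + 1 / (16 * Real.logb 2 z)) W' ≤
      potential ends (1 + 1 / (16 * Real.logb 2 z)) W := by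
  obtain ⟨R, hR, A, B, -, -, hd, hu, hsparse, rfl⟩ := h
  have hL := one_le_logb_two (z := z) (by exact_mod_cast hz)
  set f : Finset V → ℝ := fun X => (outCard ends ↑X : ℝ) ^ (1 + 1 / (16 * Real.logb 2 z))
  have hf : ∀ X, 0 ≤ f X := fun X => by positivity
  rw [lt_min_iff] at hsparse
  have hsplit : f A + f B ≤ f R := by
    refine rpow_outCard_add_le_of_sparse (Finset.disjoint_coe.2 hd)
      (by rw [← Finset.coe_union, hu]) (by positivity) ?_ ?_ ?_
    · rw [div_le_div_iff₀ (by positivity) (by norm_num)]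
      linarith
    all_goals rw [one_div_mul_eq_div, lt_div_iff₀ (by positivity)]
    · linarith [hsparse.1]
    · linarith [hsparse.2]
  calc potential ends _ (insert A (insert B (W.erase R)))
      ≤ f A + (f B + ∑ X ∈ W.erase R, f X) :=
        (sum_insert_le_add hf _ _).trans (add_le_add le_rfl (sum_insert_le_add hf _ _))
    _ ≤ f R + ∑ X ∈ W.erase R, f X := by linarith
    _ = potential ends _ W := Finset.add_sum_erase _ _ hR

end Potential

theorem stmt11_general {V E : Type*} [Fintype E] [DecidableEq V] (ends : E → Sym2 V)
    (S : Finset V) (z : ℕ) (hz : z = outCard ends ↑S) (hz2 : 2 ≤ z)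
    (W0 : Finset (Finset V))
    (hW0a : ∀ X ∈ W0, ∃ x ∈ S, ∀ y : V, y ∈ X ↔ (y ∈ S ∧ reachIn ends ↑S x y))
    (W : Finset (Finset V))
    (hreach : Relation.ReflTransGen (WeakStep ends z) W0 W) :
    (∑ R ∈ W, (outCard ends ↑R : ℝ)) ≤ 1.2 * z := by
  set p : ℝ := 1 + 1 / (16 * Real.logb 2 z)
  have hp : 1 ≤ p := by
    have := one_le_logb_two (z := z) (by exact_mod_cast hz2)
    simp only [p, le_add_iff_nonneg_right]
    positivity
  have hdecreasing : potential ends p W ≤ potential ends p W0 := by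
    induction hreach with
    | refl => exact le_rfl
    | tail _ hstep ih => exact (potential_le_of_weakStep hz2 hstep).trans ih
  have hinitial : potential ends p W0 ≤ (z : ℝ) ^ p := by
    refine sum_rpow_le_rpow_of_sum_le (fun _ _ => Nat.cast_nonneg _) hp ?_
    simp only [hz, outCard_eq_card_outEdges]
    exact_mod_cast sum_card_outEdges_le_of_reachIn_classes
      fun X hX => (hW0a X hX).imp fun _ h => h.2
  calc ∑ R ∈ W, (outCard ends ↑R : ℝ) ≤ potential ends p W := sum_outCard_le_potential hp W
    _ ≤ (z : ℝ) ^ p := hdecreasing.trans hinitial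
    _ ≤ 1.2 * z := rpow_one_add_inv_logb_le (by exact_mod_cast hz2)

/-- In the weak well-linked decomposition process — starting from the
connected components of `G[S]` and repeatedly splitting a set along a cut of sparsity
less than `1/(2^7 log z)` — the final partition `W` satisfies
`Σ_{R ∈ W} |out(R)| ≤ 1.2·|out(S)|`. -/
theorem stmt11 {V E : Type*} [Fintype V] [Fintype E] [DecidableEq V] (ends : E → Sym2 V)
    (S : Finset V) (z : ℕ) (hz : z = outCard ends ↑S) (hz2 : 2 ≤ z)
    (W0 : Finset (Finset V))
    (hW0a : ∀ X ∈ W0, ∃ x ∈ S, ∀ y : V, y ∈ X ↔ (y ∈ S ∧ reachIn ends ↑S x y))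
    (hW0b : ∀ x ∈ S, ∃ X ∈ W0, x ∈ X)
    (W : Finset (Finset V))
    (hreach : Relation.ReflTransGen (WeakStep ends z) W0 W) :
    (∑ R ∈ W, (outCard ends ↑R : ℝ)) ≤ 1.2 * z :=
  stmt11_general ends S z hz hz2 W0 hW0a W hreach

end VS
end

section
/- In the strong well-linked decomposition process (repeatedly splitting any set R in the current partition of S by a cut (A,B) of sparsity less than 1/3 with respect to out(R)), if A is the side with |out(R)∩out(A)| ≤ |out(R)∩out(B)|, then |Γ(A)| < |Γ(R)|/√2, where Γ(X) denotes out(X). Consequently, assigning each set R to level i when z/2^{i/2} < |out(R)| ≤ z/2^{(i-1)/2} (z = |out(S)|), every split strictly increases the level of the smaller side. -/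
open scoped Classical

namespace VS

variable {V V' E : Type*}

section Aux

variable {V E : Type*} [Fintype E]

private lemma card_eq_filter (p : E → Prop) :
    Nat.card {e : E // p e} = (Finset.univ.filter p).card := by
  classical
  rw [Nat.card_eq_fintype_card, Fintype.card_subtype]

private lemma out_cases {ends : E → Sym2 V} {R A B : Set V}
    (hAB : A ∪ B = R) (hd : Disjoint A B) {e : E} (hR : Out ends R e) :
    (Out ends A e ∧ ¬ Out ends B e) ∨ (Out ends B e ∧ ¬ Out ends A e) := by
  obtain ⟨u, v, he, hu, hv⟩ := hR
  have huAB : u ∈ A ∪ B := hAB ▸ hu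
  have hvA : v ∉ A := fun h => hv (hAB ▸ Set.mem_union_left B h)
  have hvB : v ∉ B := fun h => hv (hAB ▸ Set.mem_union_right A h)
  rcases huAB with huA | huB
  · left
    constructor
    · exact ⟨u, v, he, huA, hvA⟩
    · rintro ⟨x, y, hxy, hx, hy⟩
      rw [he, Sym2.eq_iff] at hxy
      rcases hxy with ⟨rfl, rfl⟩ | ⟨rfl, rfl⟩
      · exact hd.le_bot ⟨huA, hx⟩
      · exact hvB hx
  · right
    constructor
    · exact ⟨u, v, he, huB, hvB⟩
    · rintro ⟨x, y, hxy, hx, hy⟩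
      rw [he, Sym2.eq_iff] at hxy
      rcases hxy with ⟨rfl, rfl⟩ | ⟨rfl, rfl⟩
      · exact hd.le_bot ⟨hx, huB⟩
      · exact hvA hx

private lemma aux_split (ends : E → Sym2 V) {R A B : Set V}
    (hAB : A ∪ B = R) (hd : Disjoint A B) :
    outCard ends R = Nat.card {e : E // Out ends R e ∧ Out ends A e} +
      Nat.card {e : E // Out ends R e ∧ Out ends B e} := by
  classical
  rw [outCard, card_eq_filter, card_eq_filter, card_eq_filter]
  rw [← Finset.card_union_of_disjoint]
  · congr 1
    ext e
    simp only [Finset.mem_union, Finset.mem_filter, Finset.mem_univ, true_and]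
    constructor
    · intro hR
      rcases out_cases hAB hd hR with ⟨h1, _⟩ | ⟨h1, _⟩
      · exact Or.inl ⟨hR, h1⟩
      · exact Or.inr ⟨hR, h1⟩
    · rintro (⟨h, _⟩ | ⟨h, _⟩) <;> exact h
  · rw [Finset.disjoint_left]
    rintro e he1 he2
    simp only [Finset.mem_filter, Finset.mem_univ, true_and] at he1 he2
    rcases out_cases hAB hd he1.1 with ⟨_, h2⟩ | ⟨_, h2⟩
    · exact h2 he2.2
    · exact h2 he1.2

private lemma aux_le (ends : E → Sym2 V) {R A B : Set V}
    (hAB : A ∪ B = R) (hd : Disjoint A B) :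
    outCard ends A ≤ Nat.card {e : E // Out ends R e ∧ Out ends A e} +
      crossCard ends A B := by
  classical
  rw [outCard, crossCard, card_eq_filter, card_eq_filter, card_eq_filter]
  refine le_trans (Finset.card_le_card ?_) (Finset.card_union_le _ _)
  intro e he
  simp only [Finset.mem_union, Finset.mem_filter, Finset.mem_univ, true_and] at he ⊢
  obtain ⟨u, v, hev, hu, hv⟩ := he
  by_cases hvB : v ∈ B
  · exact Or.inr ⟨u, v, hev, hu, hvB⟩
  · have hvR : v ∉ R := by
      rw [← hAB]; rintro (h | h); exacts [hv h, hvB h]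
    exact Or.inl ⟨⟨u, v, hev, hAB ▸ Set.mem_union_left B hu, hvR⟩, ⟨u, v, hev, hu, hv⟩⟩

end Aux

/-- In the strong well-linked decomposition, if a set `R` is split by a
cut `(A,B)` of sparsity less than `1/3` and `A` is the side with
`|out(R)∩out(A)| ≤ |out(R)∩out(B)|`, then `|out(A)| < |out(R)|/√2`; consequently, with
levels defined by `z/2^{i/2} < |out(X)| ≤ z/2^{(i-1)/2}` (`z = |out(S)|`), the level of
`A` is strictly larger than the level of `R`. -/
theorem stmt12 {V E : Type*} [Fintype V] [Fintype E] (ends : E → Sym2 V)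
    (S R A B : Set V) (hRS : R ⊆ S) (z : ℕ) (hz : z = outCard ends S)
    (hAB : A ∪ B = R) (hd : Disjoint A B)
    (hTA : Nat.card {e : E // Out ends R e ∧ Out ends A e} ≤
      Nat.card {e : E // Out ends R e ∧ Out ends B e})
    (hsparse : 3 * (crossCard ends A B : ℝ) <
      min (Nat.card {e : E // Out ends R e ∧ Out ends A e} : ℝ)
          (Nat.card {e : E // Out ends R e ∧ Out ends B e})) :
    (outCard ends A : ℝ) < (outCard ends R : ℝ) / Real.sqrt 2 ∧
    ∀ i j : ℕ,
      ((z : ℝ) / 2 ^ ((i : ℝ) / 2) < (outCard ends R : ℝ) ∧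
        (outCard ends R : ℝ) ≤ (z : ℝ) / 2 ^ (((i : ℝ) - 1) / 2)) →
      ((z : ℝ) / 2 ^ ((j : ℝ) / 2) < (outCard ends A : ℝ) ∧
        (outCard ends A : ℝ) ≤ (z : ℝ) / 2 ^ (((j : ℝ) - 1) / 2)) →
      i < j := by
  classical
  set a := Nat.card {e : E // Out ends R e ∧ Out ends A e} with ha
  set b := Nat.card {e : E // Out ends R e ∧ Out ends B e} with hb
  have hmin : min (a : ℝ) b = a := min_eq_left (by exact_mod_cast hTA)
  rw [hmin] at hsparse
  have hc0 : (0 : ℝ) ≤ (crossCard ends A B : ℝ) := Nat.cast_nonneg _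
  have ha0 : (0 : ℝ) < a := by linarith
  have hR : (outCard ends R : ℝ) = a + b := by
    exact_mod_cast aux_split ends hAB hd
  have hA : (outCard ends A : ℝ) ≤ a + crossCard ends A B := by
    exact_mod_cast aux_le ends hAB hd
  have hab : (a : ℝ) ≤ b := by exact_mod_cast hTA
  have hs2 : Real.sqrt 2 ≤ 3 / 2 := by
    nlinarith [Real.sq_sqrt (by norm_num : (0:ℝ) ≤ 2), Real.sqrt_nonneg 2]
  have hs0 : (0 : ℝ) < Real.sqrt 2 := Real.sqrt_pos.mpr (by norm_num)
  have key : (outCard ends A : ℝ) < (outCard ends R : ℝ) / Real.sqrt 2 := by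
    have h1 : (outCard ends A : ℝ) < 4 / 3 * a := by linarith
    have h2 : (2 : ℝ) / 3 * (outCard ends R : ℝ) ≤ (outCard ends R : ℝ) / Real.sqrt 2 := by
      have h23 : (2 : ℝ) / 3 ≤ (Real.sqrt 2)⁻¹ := by
        rw [le_inv_comm₀ (by norm_num) hs0]
        calc Real.sqrt 2 ≤ 3 / 2 := hs2
          _ = (2 / 3 : ℝ)⁻¹ := by norm_num
      have hr0 : (0 : ℝ) ≤ (outCard ends R : ℝ) := Nat.cast_nonneg _
      calc (2 : ℝ) / 3 * (outCard ends R : ℝ) = (outCard ends R : ℝ) * (2 / 3) := by ring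
        _ ≤ (outCard ends R : ℝ) * (Real.sqrt 2)⁻¹ := mul_le_mul_of_nonneg_left h23 hr0
        _ = (outCard ends R : ℝ) / Real.sqrt 2 := (div_eq_mul_inv _ _).symm
    nlinarith
  refine ⟨key, ?_⟩
  rintro i j ⟨hi1, hi2⟩ ⟨hj1, hj2⟩
  by_contra hji
  push_neg at hji
  have hz0 : (0 : ℝ) ≤ (z : ℝ) := Nat.cast_nonneg _
  have hpow : ∀ x : ℝ, (0 : ℝ) < 2 ^ x := fun x => Real.rpow_pos_of_pos (by norm_num) x
  have hle : (2 : ℝ) ^ ((j : ℝ) / 2) ≤ 2 ^ ((i : ℝ) / 2) :=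
    Real.rpow_le_rpow_of_exponent_le (by norm_num)
      (by
        have hji' : (j : ℝ) ≤ i := by exact_mod_cast hji
        linarith)
  have e1 : (z : ℝ) / 2 ^ ((i : ℝ) / 2) ≤ (z : ℝ) / 2 ^ ((j : ℝ) / 2) :=
    div_le_div_of_nonneg_left hz0 (hpow _) hle
  have e2 : (z : ℝ) / 2 ^ (((i : ℝ) - 1) / 2) / Real.sqrt 2 = (z : ℝ) / 2 ^ ((i : ℝ) / 2) := by
    rw [Real.sqrt_eq_rpow, div_div, ← Real.rpow_add (by norm_num : (0:ℝ) < 2),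
      show ((i : ℝ) - 1) / 2 + 1 / 2 = (i : ℝ) / 2 by ring]
  have e3 : (outCard ends R : ℝ) / Real.sqrt 2 ≤
      (z : ℝ) / 2 ^ (((i : ℝ) - 1) / 2) / Real.sqrt 2 :=
    by gcongr
  rw [e2] at e3
  linarith


end VS
end
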